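/- Let 0 ≤ α < ω₁, let (Xₙ : n ∈ ℕ) be a partition of a topological space X into functionally ambiguous sets of class α, let (fₙ) be mappings X → Y each having a σ-sfd base of functionally ambiguous sets of class α, and define f(x) = fₙ(x) for x ∈ Xₙ. Then f has a σ-sfd base of functionally ambiguous sets of class α. -/

import Mathlib

open Set Topology Ordinal

/-- A family of sets is discrete if every point has an open neighborhood
meeting at most one member of the family. -/
def DiscreteFam {X I : Type*} [TopologicalSpace X] (U : I → Set X) : Prop :=
  ∀ x : X, ∃ V : Set X, IsOpen V ∧ x ∈ V ∧
    ∀ i j : I, (V ∩ U i).Nonempty → (V ∩ U j).Nonempty → i = j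

/-- A set is functionally closed (a zero set) if it is the preimage of `{0}`
under a continuous real-valued function. -/
def FunClosed {X : Type*} [TopologicalSpace X] (F : Set X) : Prop :=
  ∃ f : X → ℝ, Continuous f ∧ F = f ⁻¹' {0}

/-- A set is functionally open if its complement is functionally closed. -/
def FunOpen {X : Type*} [TopologicalSpace X] (U : Set X) : Prop :=
  FunClosed Uᶜ

/-- The pair (α'th functionally multiplicative class, α'th functionally additive class),
defined by transfinite recursion. -/
noncomputable def FunClassPair (X : Type*) [TopologicalSpace X] (α : Ordinal) :
    Set (Set X) × Set (Set X) :=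
  if α = 0 then ({F | FunClosed F}, {U | FunOpen U})
  else
    ({ A | ∃ f : ℕ → Set X, (∀ n, ∃ β, ∃ _ : β < α, f n ∈ (FunClassPair X β).2) ∧ A = ⋂ n, f n },
     { A | ∃ f : ℕ → Set X, (∀ n, ∃ β, ∃ _ : β < α, f n ∈ (FunClassPair X β).1) ∧ A = ⋃ n, f n })
termination_by α

/-- The α'th functionally multiplicative class. -/
noncomputable def FunMul (X : Type*) [TopologicalSpace X] (α : Ordinal) : Set (Set X) :=
  (FunClassPair X α).1

/-- The α'th functionally additive class. -/
noncomputable def FunAdd (X : Type*) [TopologicalSpace X] (α : Ordinal) : Set (Set X) :=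
  (FunClassPair X α).2

/-- Functionally ambiguous sets of class α. -/
noncomputable def FunAmb {X : Type*} [TopologicalSpace X] (α : Ordinal) (A : Set X) : Prop :=
  A ∈ FunAdd X α ∧ A ∈ FunMul X α

/-- A family is strongly functionally discrete (sfd). -/
def SFDFam {X I : Type*} [TopologicalSpace X] (A : I → Set X) : Prop :=
  ∃ U : I → Set X, DiscreteFam U ∧ (∀ i, FunOpen (U i)) ∧ ∀ i, closure (A i) ⊆ U i

/-- A collection of sets is sfd (viewed as a family indexed by itself). -/
def SFDSet {X : Type*} [TopologicalSpace X] (𝒜 : Set (Set X)) : Prop :=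
  SFDFam (fun b : 𝒜 => (b : Set X))

/-- A collection of sets is a well sfd-family. -/
def WellSFDSet {X : Type*} [TopologicalSpace X] (𝒜 : Set (Set X)) : Prop :=
  ∃ U F : 𝒜 → Set X, DiscreteFam U ∧ DiscreteFam F ∧
    (∀ b, FunOpen (U b)) ∧ (∀ b, FunClosed (F b)) ∧
    ∀ b : 𝒜, (b : Set X) ⊆ F b ∧ F b ⊆ U b

/-- An indexed family is σ-sfd if the index set splits into countably many pieces
on each of which the family is sfd. -/
def SigmaSFDFam {X I : Type*} [TopologicalSpace X] (A : I → Set X) : Prop :=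
  ∃ J : ℕ → Set I, (∀ n, SFDFam (fun i : J n => A i)) ∧ (⋃ n, J n) = Set.univ

/-- `B` is a base for the mapping `f`: every preimage of an open set is a union
of members of `B`. -/
def IsBaseFor {X Y : Type*} [TopologicalSpace X] [TopologicalSpace Y]
    (B : Set (Set X)) (f : X → Y) : Prop :=
  ∀ V : Set Y, IsOpen V → ∃ S ⊆ B, f ⁻¹' V = ⋃₀ S

/-- `f` has a σ-strongly-functionally-discrete base. -/
def SigmaSFD {X Y : Type*} [TopologicalSpace X] [TopologicalSpace Y] (f : X → Y) : Prop :=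
  ∃ B : ℕ → Set (Set X), (∀ n, SFDSet (B n)) ∧ IsBaseFor (⋃ n, B n) f

/-- `f` has a σ-sfd base consisting of functionally ambiguous sets of class α. -/
noncomputable def SigmaSFDAmb {X Y : Type*} [TopologicalSpace X] [TopologicalSpace Y]
    (α : Ordinal) (f : X → Y) : Prop :=
  ∃ B : ℕ → Set (Set X), (∀ n, SFDSet (B n)) ∧ (∀ n, ∀ b ∈ B n, FunAmb α b) ∧
    IsBaseFor (⋃ n, B n) f

/-- `f` belongs to the α'th functionally Lebesgue class. -/
noncomputable def LebClass {X Y : Type*} [TopologicalSpace X] [TopologicalSpace Y]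
    (α : Ordinal) (f : X → Y) : Prop :=
  ∀ V : Set Y, IsOpen V → f ⁻¹' V ∈ FunAdd X α

/-- `Y` has a σ-disjoint base. -/
def SigmaDisjointBase (Y : Type*) [TopologicalSpace Y] : Prop :=
  ∃ V : ℕ → Set (Set Y), (∀ m, (V m).PairwiseDisjoint id) ∧
    TopologicalSpace.IsTopologicalBasis (⋃ m, V m)

/-! A base member of some `fₙ` meets `Xₙ` in an ambiguous set of class `α`, since both ambiguous
classes are closed under finite intersections, and shrinking the members of an sfd family keeps it
sfd. The sets `b ∩ Xₙ`, with `b` running over a σ-sfd base of `fₙ`, therefore form a σ-sfd base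
of `f`: as the `Xₙ` cover `X`, `f⁻¹(V) = ⋃ₙ (fₙ⁻¹(V) ∩ Xₙ)`. -/

theorem setOf_ne_zero_eq_iUnion_le_abs {X : Type*} (f : X → ℝ) :
    {x | f x ≠ 0} = ⋃ n : ℕ, {x | ((n : ℝ) + 1)⁻¹ ≤ |f x|} := by
  ext x
  simp only [mem_ofPred_eq, mem_iUnion]
  constructor
  · intro hx
    obtain ⟨n, hn⟩ := exists_nat_one_div_lt (abs_pos.2 hx)
    exact ⟨n, by simpa only [one_div] using hn.le⟩
  · rintro ⟨n, hn⟩ hx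
    rw [hx, abs_zero] at hn
    exact (Nat.inv_pos_of_nat).not_ge hn

section FunctionalClasses

variable {X : Type*} [TopologicalSpace X]

theorem FunClosed.inter {F G : Set X} (hF : FunClosed F) (hG : FunClosed G) :
    FunClosed (F ∩ G) := by
  obtain ⟨f, hf, rfl⟩ := hF
  obtain ⟨g, hg, rfl⟩ := hG
  refine ⟨fun x => |f x| + |g x|, by fun_prop, ?_⟩
  ext x
  simp only [mem_inter_iff, mem_preimage, mem_singleton_iff]
  rw [add_eq_zero_iff_of_nonneg (abs_nonneg _) (abs_nonneg _), abs_eq_zero, abs_eq_zero]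

theorem FunClosed.union {F G : Set X} (hF : FunClosed F) (hG : FunClosed G) :
    FunClosed (F ∪ G) := by
  obtain ⟨f, hf, rfl⟩ := hF
  obtain ⟨g, hg, rfl⟩ := hG
  exact ⟨fun x => f x * g x, by fun_prop, by ext x; simp [mul_eq_zero]⟩

theorem FunOpen.inter {U V : Set X} (hU : FunOpen U) (hV : FunOpen V) : FunOpen (U ∩ V) := by
  rw [FunOpen, compl_inter]
  exact hU.union hV

theorem funClosed_setOf_le_abs {f : X → ℝ} (hf : Continuous f) (c : ℝ) :
    FunClosed {x | c ≤ |f x|} :=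
  ⟨fun x => max (c - |f x|) 0, by fun_prop, by ext x; simp⟩

theorem FunOpen.exists_eq_iUnion {U : Set X} (hU : FunOpen U) :
    ∃ F : ℕ → Set X, (∀ n, FunClosed (F n)) ∧ U = ⋃ n, F n := by
  obtain ⟨f, hf, hUc⟩ := hU
  refine ⟨fun n => {x | ((n : ℝ) + 1)⁻¹ ≤ |f x|}, fun n => funClosed_setOf_le_abs hf _, ?_⟩
  rw [← setOf_ne_zero_eq_iUnion_le_abs, ← compl_compl U, hUc]
  rfl

theorem FunClosed.exists_eq_iInter {F : Set X} (hF : FunClosed F) :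
    ∃ G : ℕ → Set X, (∀ n, FunOpen (G n)) ∧ F = ⋂ n, G n := by
  obtain ⟨f, hf, rfl⟩ := hF
  refine ⟨fun n => {x | ((n : ℝ) + 1)⁻¹ ≤ |f x|}ᶜ,
    fun n => by rw [FunOpen, compl_compl]; exact funClosed_setOf_le_abs hf _, ?_⟩
  rw [← compl_iUnion, ← setOf_ne_zero_eq_iUnion_le_abs]
  ext x
  simp

theorem mem_funMul_zero {A : Set X} : A ∈ FunMul X 0 ↔ FunClosed A := by
  rw [FunMul, FunClassPair, if_pos rfl]
  rfl

theorem mem_funAdd_zero {A : Set X} : A ∈ FunAdd X 0 ↔ FunOpen A := by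
  rw [FunAdd, FunClassPair, if_pos rfl]
  rfl

theorem mem_funMul_iff {α : Ordinal} (hα : α ≠ 0) {A : Set X} :
    A ∈ FunMul X α ↔ ∃ g : ℕ → Set X,
      (∀ n, ∃ β, ∃ _ : β < α, g n ∈ FunAdd X β) ∧ A = ⋂ n, g n := by
  rw [FunMul, FunClassPair, if_neg hα]
  rfl

theorem mem_funAdd_iff {α : Ordinal} (hα : α ≠ 0) {A : Set X} :
    A ∈ FunAdd X α ↔ ∃ g : ℕ → Set X,
      (∀ n, ∃ β, ∃ _ : β < α, g n ∈ FunMul X β) ∧ A = ⋃ n, g n := by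
  rw [FunAdd, FunClassPair, if_neg hα]
  rfl

theorem funMul_mono {β γ : Ordinal} (hβγ : β ≤ γ) : FunMul X β ⊆ FunMul X γ := by
  rcases hβγ.eq_or_lt with rfl | hlt
  · exact subset_rfl
  intro A hA
  rw [mem_funMul_iff hlt.ne_bot]
  rcases eq_or_ne β 0 with rfl | hβ
  · obtain ⟨G, hG, rfl⟩ := (mem_funMul_zero.1 hA).exists_eq_iInter
    exact ⟨G, fun n => ⟨0, hlt, mem_funAdd_zero.2 (hG n)⟩, rfl⟩
  · obtain ⟨g, hg, rfl⟩ := (mem_funMul_iff hβ).1 hA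
    refine ⟨g, fun n => ?_, rfl⟩
    obtain ⟨δ, hδ, hgn⟩ := hg n
    exact ⟨δ, hδ.trans hlt, hgn⟩

theorem funAdd_mono {β γ : Ordinal} (hβγ : β ≤ γ) : FunAdd X β ⊆ FunAdd X γ := by
  rcases hβγ.eq_or_lt with rfl | hlt
  · exact subset_rfl
  intro A hA
  rw [mem_funAdd_iff hlt.ne_bot]
  rcases eq_or_ne β 0 with rfl | hβ
  · obtain ⟨F, hF, rfl⟩ := (mem_funAdd_zero.1 hA).exists_eq_iUnion
    exact ⟨F, fun n => ⟨0, hlt, mem_funMul_zero.2 (hF n)⟩, rfl⟩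
  · obtain ⟨g, hg, rfl⟩ := (mem_funAdd_iff hβ).1 hA
    refine ⟨g, fun n => ?_, rfl⟩
    obtain ⟨δ, hδ, hgn⟩ := hg n
    exact ⟨δ, hδ.trans hlt, hgn⟩

theorem inter_mem_funMul {α : Ordinal} {A B : Set X} (hA : A ∈ FunMul X α)
    (hB : B ∈ FunMul X α) : A ∩ B ∈ FunMul X α := by
  rcases eq_or_ne α 0 with rfl | hα
  · exact mem_funMul_zero.2 ((mem_funMul_zero.1 hA).inter (mem_funMul_zero.1 hB))
  obtain ⟨g, hg, rfl⟩ := (mem_funMul_iff hα).1 hA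
  obtain ⟨k, hk, rfl⟩ := (mem_funMul_iff hα).1 hB
  let e := Equiv.natSumNatEquivNat.symm
  have hgk : ∀ s, ∃ β, ∃ _ : β < α, Sum.elim g k s ∈ FunAdd X β := Sum.rec hg hk
  refine (mem_funMul_iff hα).2 ⟨fun n => Sum.elim g k (e n), fun n => hgk (e n), ?_⟩
  rw [e.surjective.iInter_comp (Sum.elim g k), iInter_sum]
  rfl

theorem inter_mem_funAdd {α : Ordinal} {A B : Set X} (hA : A ∈ FunAdd X α)
    (hB : B ∈ FunAdd X α) : A ∩ B ∈ FunAdd X α := by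
  rcases eq_or_ne α 0 with rfl | hα
  · exact mem_funAdd_zero.2 ((mem_funAdd_zero.1 hA).inter (mem_funAdd_zero.1 hB))
  obtain ⟨g, hg, rfl⟩ := (mem_funAdd_iff hα).1 hA
  obtain ⟨k, hk, rfl⟩ := (mem_funAdd_iff hα).1 hB
  refine (mem_funAdd_iff hα).2
    ⟨fun n => g n.unpair.1 ∩ k n.unpair.2, fun n => ?_, by rw [iUnion_inter_iUnion, ← iUnion_unpair]⟩
  obtain ⟨β, hβ, hgn⟩ := hg n.unpair.1
  obtain ⟨γ, hγ, hkn⟩ := hk n.unpair.2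
  exact ⟨max β γ, max_lt hβ hγ, inter_mem_funMul
    (funMul_mono (le_max_left _ _) hgn) (funMul_mono (le_max_right _ _) hkn)⟩

theorem FunAmb.inter {α : Ordinal} {A B : Set X} (hA : FunAmb α A) (hB : FunAmb α B) :
    FunAmb α (A ∩ B) :=
  ⟨inter_mem_funAdd hA.1 hB.1, inter_mem_funMul hA.2 hB.2⟩

end FunctionalClasses

section Bases

variable {X Y : Type*} [TopologicalSpace X] [TopologicalSpace Y]

theorem DiscreteFam.comp {I J : Type*} {U : I → Set X} (hU : DiscreteFam U) {e : J → I}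
    (he : Function.Injective e) : DiscreteFam (U ∘ e) := by
  intro x
  obtain ⟨V, hV, hxV, hmeets⟩ := hU x
  exact ⟨V, hV, hxV, fun i j hi hj => he (hmeets _ _ hi hj)⟩

theorem SFDSet.image_of_subset {𝒜 : Set (Set X)} (h𝒜 : SFDSet 𝒜) (φ : Set X → Set X)
    (hφ : ∀ b ∈ 𝒜, φ b ⊆ b) : SFDSet (φ '' 𝒜) := by
  obtain ⟨U, hdisc, hopen, hcl⟩ := h𝒜
  have hsurj : ∀ c : ↥(φ '' 𝒜), ∃ b : 𝒜, φ b = c := by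
    rintro ⟨c, b, hb, rfl⟩
    exact ⟨⟨b, hb⟩, rfl⟩
  choose pick hpick using hsurj
  have hinj : Function.Injective pick := fun c c' h => Subtype.ext (by rw [← hpick, ← hpick, h])
  refine ⟨U ∘ pick, hdisc.comp hinj, fun c => hopen _, fun c => ?_⟩
  calc closure (c : Set X) ⊆ closure (pick c : Set X) :=
        closure_mono (hpick c ▸ hφ _ (pick c).2)
    _ ⊆ U (pick c) := hcl _

theorem IsBaseFor.mono {B B' : Set (Set X)} {f : X → Y} (hB : IsBaseFor B f) (h : B ⊆ B') :
    IsBaseFor B' f := fun V hV =>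
  let ⟨S, hSB, hS⟩ := hB V hV
  ⟨S, hSB.trans h, hS⟩

theorem IsBaseFor.iUnion_image_inter {ι : Type*} {P : ι → Set X} (hP : ⋃ i, P i = Set.univ)
    {B : ι → Set (Set X)} {g : ι → X → Y} (hB : ∀ i, IsBaseFor (B i) (g i)) {f : X → Y}
    (hf : ∀ i, ∀ x ∈ P i, f x = g i x) : IsBaseFor (⋃ i, (· ∩ P i) '' B i) f := by
  intro V hV
  choose S hSB hS using fun i => hB i V hV
  refine ⟨⋃ i, (· ∩ P i) '' S i, iUnion_mono fun i => image_mono (hSB i), ?_⟩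
  ext x
  simp only [mem_preimage, sUnion_iUnion, sUnion_image, mem_iUnion, mem_inter_iff, exists_prop]
  constructor
  · intro hx
    obtain ⟨i, hxi⟩ := mem_iUnion.1 (hP ▸ mem_univ x)
    obtain ⟨s, hs, hxs⟩ := (hS i ▸ (hf i x hxi ▸ hx : g i x ∈ V) : x ∈ ⋃₀ S i)
    exact ⟨i, s, hs, hxs, hxi⟩
  · rintro ⟨i, s, hs, hxs, hxi⟩
    rw [hf i x hxi, ← mem_preimage, hS i]
    exact ⟨s, hs, hxs⟩

theorem sigmaSFDAmb_of_iUnion₂ {α : Ordinal} {B : ℕ → ℕ → Set (Set X)}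
    (hsfd : ∀ n m, SFDSet (B n m)) (hamb : ∀ n m, ∀ b ∈ B n m, FunAmb α b) {f : X → Y}
    (hbase : IsBaseFor (⋃ n, ⋃ m, B n m) f) : SigmaSFDAmb α f :=
  ⟨fun k => B k.unpair.1 k.unpair.2, fun k => hsfd _ _, fun k => hamb _ _,
    by rwa [iUnion_unpair]⟩

end Bases

theorem stmt10_general {X Y : Type*} [TopologicalSpace X] [TopologicalSpace Y]
    (α : Ordinal) (Xn : ℕ → Set X)
    (hcov : (⋃ n, Xn n) = Set.univ)
    (hamb : ∀ n, FunAmb α (Xn n))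
    (fn : ℕ → X → Y) (hfn : ∀ n, SigmaSFDAmb α (fn n))
    (f : X → Y) (hfdef : ∀ n, ∀ x ∈ Xn n, f x = fn n x) :
    SigmaSFDAmb α f := by
  choose B hsfd hambB hbase using hfn
  refine sigmaSFDAmb_of_iUnion₂ (B := fun n m => (· ∩ Xn n) '' B n m)
    (fun n m => (hsfd n m).image_of_subset _ fun _ _ => inter_subset_left) ?_ ?_
  · rintro n m _ ⟨b, hb, rfl⟩
    exact (hambB n m b hb).inter (hamb n)
  · simpa only [image_iUnion] using IsBaseFor.iUnion_image_inter hcov hbase hfdef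

theorem stmt10 {X Y : Type*} [TopologicalSpace X] [TopologicalSpace Y]
    (α : Ordinal) (hα : α < ω₁) (Xn : ℕ → Set X)
    (hdisj : Pairwise (Function.onFun Disjoint Xn)) (hcov : (⋃ n, Xn n) = Set.univ)
    (hamb : ∀ n, FunAmb α (Xn n))
    (fn : ℕ → X → Y) (hfn : ∀ n, SigmaSFDAmb α (fn n))
    (f : X → Y) (hfdef : ∀ n, ∀ x ∈ Xn n, f x = fn n x) :
    SigmaSFDAmb α f :=
  stmt10_general α Xn hcov hamb fn hfn f hfdef
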